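/- arXiv:2401.07266 — 4 statements merged into one kernel-verified Lean document; each statement's English description precedes it below -/
import Mathlib

section
/- Let F be a bipartite graph with a vertex v such that F−v is a forest, with Δ = Δ(F−v) and t = 2(|V(F)|−1). Then there exists a constant c (one may take c = t) such that: for any graph G with vertex partition V(G) = U ⊔ W, if 2e(U) + e(U,W) > 3c|U| + c|W|, then G contains a copy of F−v in which the F-neighbors of v are all embedded into U. -/
/-!
Write `∑_{u ∈ U} d(u) = 2e(U) + e(U, W)`. Deleting vertices of degree at most `c` one at a time
shows that a graph of average degree above `2c` has a nonempty subgraph of minimum degree above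
`c`. If `2e(U) > 2c|U|` this applies to `G[U]` and gives `X = Y ⊆ U`; otherwise
`e(U, W) > c(|U| + |W|)` and it applies to the bipartite graph of `U`–`W` edges, giving
`X ⊆ U` and `Y ⊆ W`. Either way every vertex of `X` has more than `c` neighbours in `Y` and vice
versa. As `c ≥ |V(F - v)| - 1`, the forest `F - v` then embeds greedily, leaf by leaf, with the
colour class containing `N_F(v)` sent into `X ⊆ U`.
-/

open Finset SimpleGraph

namespace SimpleGraph

variable {α V : Type*}

theorem IsAcyclic.exists_forall_adj_eq [Finite α] [Nonempty α] {H : SimpleGraph α}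
    (hH : H.IsAcyclic) : ∃ x, ∀ y z, H.Adj x y → H.Adj x z → y = z := by
  -- The first vertex `u` of a longest path `p` is a leaf: its neighbours all lie on `p`, so they
  -- all equal `p.snd`.
  obtain ⟨u, v, p, hp, hmax⟩ := Walk.exists_isPath_forall_isPath_length_le_length H
  have hsupp : ∀ w, H.Adj u w → w ∈ p.support := by
    intro w hw
    by_contra hwp
    have := hmax w v (p.cons hw.symm) (hp.cons hwp)
    rw [Walk.length_cons] at this
    omega
  exact ⟨u, fun y z hy hz => (hH.eq_snd_of_adj_start hp hy (hsupp y hy)).trans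
    (hH.eq_snd_of_adj_start hp hz (hsupp z hz)).symm⟩

theorem IsAcyclic.exists_mem_forall_adj_eq {H : SimpleGraph α} (hH : H.IsAcyclic)
    {s : Finset α} (hs : s.Nonempty) :
    ∃ x ∈ s, ∀ y ∈ s, ∀ z ∈ s, H.Adj x y → H.Adj x z → y = z := by
  have : Nonempty (s : Set α) := hs.to_subtype
  obtain ⟨⟨x, hx⟩, hleaf⟩ := (hH.induce (s : Set α)).exists_forall_adj_eq
  exact ⟨x, hx, fun y hy z hz hxy hxz => congrArg Subtype.val (hleaf ⟨y, hy⟩ ⟨z, hz⟩ hxy hxz)⟩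

def degreeIn (G : SimpleGraph V) [DecidableRel G.Adj] (s : Finset V) (x : V) : ℕ :=
  #{y ∈ s | G.Adj x y}

section degreeIn

variable {G : SimpleGraph V} [DecidableRel G.Adj]

theorem degreeIn_mono {s t : Finset V} (h : s ⊆ t) (x : V) : G.degreeIn s x ≤ G.degreeIn t x :=
  card_le_card (filter_subset_filter _ h)

theorem sum_degreeIn_comm (A B : Finset V) :
    ∑ x ∈ A, G.degreeIn B x = ∑ y ∈ B, G.degreeIn A y := by
  have := sum_card_bipartiteAbove_eq_sum_card_bipartiteBelow (s := A) (t := B) G.Adj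
  simpa only [degreeIn, bipartiteAbove, bipartiteBelow, G.adj_comm] using this

variable [DecidableEq V]

theorem degree_eq_degreeIn_add_degreeIn [Fintype V] {U W : Finset V} (hUW : Disjoint U W)
    (hcover : U ∪ W = univ) (x : V) : G.degree x = G.degreeIn U x + G.degreeIn W x := by
  rw [← card_neighborFinset_eq_degree, neighborFinset_eq_filter, ← hcover, filter_union,
    card_union_of_disjoint (disjoint_filter_filter hUW)]
  rfl

theorem sum_degreeIn_insert {s : Finset V} {x : V} (hx : x ∉ s) :
    ∑ y ∈ insert x s, G.degreeIn (insert x s) y =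
      ∑ y ∈ s, G.degreeIn s y + 2 * G.degreeIn s x := by
  have hself : G.degreeIn (insert x s) x = G.degreeIn s x := by
    simp [degreeIn, filter_insert]
  have hother : ∀ y ∈ s,
      G.degreeIn (insert x s) y = G.degreeIn s y + if G.Adj y x then 1 else 0 := by
    intro y hy
    unfold degreeIn
    rw [filter_insert]
    split_ifs with h
    · rw [card_insert_of_notMem (fun h' => hx (mem_filter.1 h').1)]
    · rfl
  rw [sum_insert hx, hself, sum_congr rfl hother, sum_add_distrib, ← card_filter]
  have : #{y ∈ s | G.Adj y x} = G.degreeIn s x := by simp only [degreeIn, G.adj_comm]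
  omega

theorem exists_subset_forall_lt_degreeIn (k : ℕ) {s : Finset V}
    (h : 2 * k * #s < ∑ x ∈ s, G.degreeIn s x) :
    ∃ T ⊆ s, T.Nonempty ∧ ∀ x ∈ T, k < G.degreeIn T x := by
  induction s using Finset.strongInduction with
  | H s ih =>
    by_cases hmin : ∀ x ∈ s, k < G.degreeIn s x
    · refine ⟨s, Subset.rfl, nonempty_iff_ne_empty.2 ?_, hmin⟩
      rintro rfl
      simp at h
    push Not at hmin
    obtain ⟨x, hx, hxk⟩ := hmin
    have hsum := sum_degreeIn_insert (G := G) (notMem_erase x s)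
    rw [insert_erase hx] at hsum
    have hcard := card_erase_add_one hx
    have hdeg := degreeIn_mono (G := G) (erase_subset x s) x
    obtain ⟨T, hTs, hT⟩ := ih _ (erase_ssubset hx) (by rw [← hcard] at h; nlinarith)
    exact ⟨T, hTs.trans (erase_subset x s), hT⟩

end degreeIn

theorem exists_dense_pair_of_lt_sum_degree [Fintype V] [DecidableEq V] (G : SimpleGraph V)
    [DecidableRel G.Adj] {U W : Finset V} (hUW : Disjoint U W) (hcover : U ∪ W = univ) {c : ℕ}
    (h : 3 * c * #U + c * #W < ∑ u ∈ U, G.degree u) :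
    ∃ X ⊆ U, ∃ Y, X.Nonempty ∧ (∀ x ∈ X, c < G.degreeIn Y x) ∧ ∀ y ∈ Y, c < G.degreeIn X y := by
  classical
  rw [sum_congr rfl fun u _ => degree_eq_degreeIn_add_degreeIn hUW hcover u, sum_add_distrib] at h
  by_cases hU : 2 * c * #U < ∑ u ∈ U, G.degreeIn U u
  · obtain ⟨T, hTU, hT, hTdeg⟩ := exists_subset_forall_lt_degreeIn c hU
    exact ⟨T, hTU, T, hT, hTdeg, hTdeg⟩
  -- Otherwise `e(U, W) > c (|U| + |W|)`: the graph `B` of `U`–`W` edges has average degree `> 2c`.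
  let B := G ⊓ fromRel fun a b => a ∈ U ∧ b ∈ W
  have hBU : ∀ x ∈ U, ∀ T, B.degreeIn T x = G.degreeIn (T ∩ W) x := by
    intro x hx T
    have hxW : x ∉ W := Finset.disjoint_left.1 hUW hx
    simp only [degreeIn]
    congr 1; ext y
    have := G.ne_of_adj (a := x) (b := y)
    simp only [mem_filter, mem_inter, B, inf_adj, fromRel_adj]
    tauto
  have hBW : ∀ x ∈ W, ∀ T, B.degreeIn T x = G.degreeIn (T ∩ U) x := by
    intro x hx T
    have hxU : x ∉ U := Finset.disjoint_right.1 hUW hx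
    simp only [degreeIn]
    congr 1; ext y
    have := G.ne_of_adj (a := x) (b := y)
    simp only [mem_filter, mem_inter, B, inf_adj, fromRel_adj]
    tauto
  have hB : 2 * c * #(U ∪ W) < ∑ x ∈ U ∪ W, B.degreeIn (U ∪ W) x := by
    rw [sum_union hUW, card_union_of_disjoint hUW,
      sum_congr rfl fun x hx => hBU x hx (U ∪ W), sum_congr rfl fun x hx => hBW x hx (U ∪ W),
      union_inter_cancel_right, union_inter_cancel_left, sum_degreeIn_comm W U]
    nlinarith
  obtain ⟨T, hTU, ⟨x, hxT⟩, hTdeg⟩ := exists_subset_forall_lt_degreeIn c hB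
  refine ⟨T ∩ U, inter_subset_right, T ∩ W, ?_, fun x hx => ?_, fun y hy => ?_⟩
  · by_cases hxU : x ∈ U
    · exact ⟨x, mem_inter.2 ⟨hxT, hxU⟩⟩
    · have hxW : x ∈ W := (mem_union.1 (hTU hxT)).resolve_left hxU
      have := hTdeg x hxT
      rw [hBW x hxW] at this
      exact (filter_nonempty_iff.1 (card_pos.1 (c.zero_le.trans_lt this))).imp fun y hy => hy.1
  · rw [← hBU x (mem_inter.1 hx).2]; exact hTdeg x (mem_inter.1 hx).1
  · rw [← hBW y (mem_inter.1 hy).2]; exact hTdeg y (mem_inter.1 hy).1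


section GreedyEmbedding

variable [DecidableEq α] [DecidableEq V]

def IsPartialCopy (H : SimpleGraph α) (G : SimpleGraph V) (box : α → Finset V) (s : Finset α)
    (f : α → V) : Prop :=
  Set.InjOn f s ∧ (∀ a ∈ s, f a ∈ box a) ∧ ∀ a ∈ s, ∀ b ∈ s, H.Adj a b → G.Adj (f a) (f b)

variable {H : SimpleGraph α} {G : SimpleGraph V} {box : α → Finset V}

theorem IsPartialCopy.update_insert {s : Finset α} {f : α → V} (hf : IsPartialCopy H G box s f)
    {x : α} (hx : x ∉ s) {z : V} (hz : z ∈ box x) (hzf : z ∉ s.image f)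
    (hadj : ∀ y ∈ s, H.Adj x y → G.Adj z (f y)) :
    IsPartialCopy H G box (insert x s) (Function.update f x z) := by
  obtain ⟨hinj, hbox, hhom⟩ := hf
  have hfeq : Set.EqOn (Function.update f x z) f s := fun y hy =>
    Function.update_of_ne (ne_of_mem_of_not_mem hy hx) _ _
  refine ⟨?_, ?_, ?_⟩
  · rw [coe_insert, Set.injOn_insert (mod_cast hx), Function.update_self, hfeq.image_eq]
    exact ⟨hinj.congr hfeq.symm, mod_cast hzf⟩
  · intro a ha
    rcases mem_insert.1 ha with rfl | ha
    · rwa [Function.update_self]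
    · rw [hfeq ha]; exact hbox a ha
  · intro a ha b hb hab
    rcases mem_insert.1 ha with rfl | ha' <;> rcases mem_insert.1 hb with rfl | hb'
    · exact absurd hab (H.loopless.irrefl _)
    · rw [Function.update_self, hfeq hb']; exact hadj b hb' hab
    · rw [Function.update_self, hfeq ha']; exact (hadj a ha' hab.symm).symm
    · rw [hfeq ha', hfeq hb']; exact hhom a ha' b hb' hab

variable [Fintype α] [DecidableRel G.Adj]

theorem IsAcyclic.exists_isPartialCopy (hH : H.IsAcyclic)
    (hcard : ∀ a, Fintype.card α ≤ #(box a))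
    (hbox : ∀ a b, H.Adj a b → ∀ z ∈ box a, Fintype.card α ≤ G.degreeIn (box b) z)
    (s : Finset α) : ∃ f, IsPartialCopy H G box s f := by
  induction s using Finset.strongInduction with
  | H s ih =>
    rcases s.eq_empty_or_nonempty with rfl | hs
    · have hne : ∀ a, (box a).Nonempty := fun a =>
        card_pos.1 ((Fintype.card_pos_iff.2 ⟨a⟩).trans_le (hcard a))
      exact ⟨fun a => (hne a).choose, by simp [IsPartialCopy]⟩
    -- Remove a leaf `x`, embed the rest, and put `x` next to the image of its neighbour.
    obtain ⟨x, hx, hleaf⟩ := hH.exists_mem_forall_adj_eq hs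
    obtain ⟨f, hf⟩ := ih _ (erase_ssubset hx)
    have himage : #((s.erase x).image f) < Fintype.card α :=
      card_image_le.trans_lt ((card_erase_lt_of_mem hx).trans_le (card_le_univ s))
    obtain ⟨z, hz, hzf, hadj⟩ : ∃ z ∈ box x, z ∉ (s.erase x).image f ∧
        ∀ y ∈ s.erase x, H.Adj x y → G.Adj z (f y) := by
      by_cases hnbr : ∃ y ∈ s.erase x, H.Adj x y
      · obtain ⟨y, hy, hxy⟩ := hnbr
        obtain ⟨z, hz, hzf⟩ := exists_mem_notMem_of_card_lt_card
          (himage.trans_le (hbox y x hxy.symm _ (hf.2.1 y hy)))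
        rw [mem_filter] at hz
        refine ⟨z, hz.1, hzf, fun y' hy' hxy' => ?_⟩
        rw [hleaf y' (mem_of_mem_erase hy') y (mem_of_mem_erase hy) hxy' hxy]
        exact hz.2.symm
      · push Not at hnbr
        obtain ⟨z, hz, hzf⟩ := exists_mem_notMem_of_card_lt_card (himage.trans_le (hcard x))
        exact ⟨z, hz, hzf, fun y hy hxy => absurd hxy (hnbr y hy)⟩
    refine ⟨Function.update f x z, ?_⟩
    simpa only [insert_erase hx] using hf.update_insert (notMem_erase x s) hz hzf hadj

theorem IsAcyclic.exists_copy (hH : H.IsAcyclic) (hcard : ∀ a, Fintype.card α ≤ #(box a))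
    (hbox : ∀ a b, H.Adj a b → ∀ z ∈ box a, Fintype.card α ≤ G.degreeIn (box b) z) :
    ∃ f : H.Copy G, ∀ a, f a ∈ box a := by
  obtain ⟨f, hinj, hfbox, hhom⟩ := hH.exists_isPartialCopy hcard hbox univ
  exact ⟨⟨⟨f, fun hab => hhom _ (mem_univ _) _ (mem_univ _) hab⟩, by simpa using hinj⟩,
    fun a => hfbox a (mem_univ a)⟩

theorem IsAcyclic.exists_copy_of_coloring (hH : H.IsAcyclic) (C : H.Coloring (Fin 2)) (i : Fin 2)
    {X Y : Finset V} (hX : X.Nonempty) (hXY : ∀ x ∈ X, Fintype.card α ≤ G.degreeIn Y x)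
    (hYX : ∀ y ∈ Y, Fintype.card α ≤ G.degreeIn X y) :
    ∃ f : H.Copy G, ∀ a, f a ∈ if C a = i then Y else X := by
  refine hH.exists_copy (fun a => ?_) (fun a b hab z hz => ?_)
  · obtain ⟨x, hx⟩ := hX
    have hY : Fintype.card α ≤ #Y := (hXY x hx).trans (card_filter_le _ _)
    rcases (Fintype.card α).eq_zero_or_pos with h0 | hpos
    · omega
    obtain ⟨y, hy, -⟩ := filter_nonempty_iff.1 (card_pos.1 (hpos.trans_le (hXY x hx)))
    have hX : Fintype.card α ≤ #X := (hYX y hy).trans (card_filter_le _ _)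
    split_ifs <;> assumption
  · have hCab := C.valid hab
    by_cases ha : C a = i
    · have hb : C b ≠ i := ha ▸ hCab.symm
      simp only [ha, hb, if_true, if_false] at hz ⊢
      exact hYX z hz
    · have hb : C b = i := by omega
      simp only [ha, hb, if_true, if_false] at hz ⊢
      exact hXY z hz

end GreedyEmbedding

end SimpleGraph

/-- The forest lemma: for a bipartite graph F with a vertex v₀ such that F−v₀
is a forest, there is a constant c (one may take c = 2(|V(F)|−1)) such that any
graph G with vertex partition U ⊔ W satisfying 2e(U) + e(U,W) > 3c|U| + c|W|
(equivalently Σ_{u∈U} d(u) > 3c|U| + c|W|) contains a copy of F−v₀ in which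
the F-neighbors of v₀ all embed into U. -/
theorem stmt_12 (p : ℕ) (F : SimpleGraph (Fin p)) (v₀ : Fin p)
    (hbip : F.Colorable 2)
    (hforest : (SimpleGraph.induce {u : Fin p | u ≠ v₀} F).IsAcyclic) :
    ∃ c : ℝ, c = 2 * ((p : ℝ) - 1) ∧
      ∀ (V : Type) [Fintype V] [DecidableEq V] (G : SimpleGraph V)
        [DecidableRel G.Adj] (U W : Finset V),
        Disjoint U W → U ∪ W = Finset.univ →
        3 * c * (U.card : ℝ) + c * (W.card : ℝ) < ∑ u ∈ U, (G.degree u : ℝ) →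
        ∃ f : Fin p → V, Set.InjOn f {u | u ≠ v₀} ∧
          (∀ u w, u ≠ v₀ → w ≠ v₀ → F.Adj u w → G.Adj (f u) (f w)) ∧
          (∀ u, F.Adj v₀ u → f u ∈ U) := by
  classical
  refine ⟨_, rfl, fun V _ _ G _ U W hUW hcover hdeg => ?_⟩
  have hc : ((2 * (p - 1) : ℕ) : ℝ) = 2 * ((p : ℝ) - 1) := by
    push_cast [Nat.cast_sub v₀.pos]; ring
  obtain ⟨X, hXU, Y, hX, hXY, hYX⟩ :=
    exists_dense_pair_of_lt_sum_degree G hUW hcover (c := 2 * (p - 1))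
      (by rw [← hc] at hdeg; exact_mod_cast hdeg)
  have hp : Fintype.card {u : Fin p | u ≠ v₀} ≤ 2 * (p - 1) + 1 :=
    (Fintype.card_subtype_le _).trans (by rw [Fintype.card_fin]; omega)
  let C := hbip.some
  obtain ⟨f, hf⟩ := hforest.exists_copy_of_coloring (C.comp (Embedding.induce _).toHom) (C v₀)
    hX (fun x hx => hp.trans (hXY x hx)) (fun y hy => hp.trans (hYX y hy))
  obtain ⟨x₀, -⟩ := hX
  refine ⟨fun u => if h : u = v₀ then x₀ else f ⟨u, h⟩, ?_, ?_, ?_⟩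
  · intro u (hu : u ≠ v₀) w (hw : w ≠ v₀) huw
    simp only [hu, hw, dite_false] at huw
    exact congrArg Subtype.val (f.injective huw)
  · intro u w hu hw huw
    simpa [hu, hw] using f.toHom.map_adj (show (F.induce _).Adj ⟨u, hu⟩ ⟨w, hw⟩ from huw)
  · intro u hu
    show (if h : u = v₀ then x₀ else f ⟨u, h⟩) ∈ U
    rw [dif_neg hu.ne']
    exact hXU (by simpa [(C.valid hu).symm] using hf ⟨u, hu.ne'⟩)
end

section
/- Let G be an F-free graph where F is as in the forest lemma, and let c = 2(|V(F)|−1). Then for every vertex u of G: 2e(N₁(u)) + e(N₁(u), N₂(u)) ≤ 2c·d(u) + c(n−1) ≤ 3cn, where N₁(u) and N₂(u) are the first and second neighborhoods of u. -/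
open Finset SimpleGraph

/-- The number of ordered adjacent pairs (s,t) ∈ S × T; for S = T this is
twice the number of edges within S, and for disjoint S, T it is the number of
edges between S and T. -/
def edgesBetween {V : Type*} [Fintype V] [DecidableEq V] (G : SimpleGraph V)
    [DecidableRel G.Adj] (S T : Finset V) : ℕ :=
  ((S ×ˢ T).filter (fun q => G.Adj q.1 q.2)).card

section Helpers

variable {V : Type*} [Fintype V] [DecidableEq V] (G : SimpleGraph V) [DecidableRel G.Adj]

lemma edgesBetween_eq_sum (S T : Finset V) :
    edgesBetween G S T = ∑ a ∈ S, (T.filter (fun b => G.Adj a b)).card := by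
  unfold edgesBetween
  rw [Finset.card_filter, Finset.sum_product]
  exact Finset.sum_congr rfl fun a _ => (Finset.card_filter _ _).symm

lemma edgesBetween_eq_sum' (S T : Finset V) :
    edgesBetween G S T = ∑ b ∈ T, (S.filter (fun a => G.Adj a b)).card := by
  rw [edgesBetween_eq_sum]
  simp only [Finset.card_filter]
  exact Finset.sum_comm

lemma edgesBetween_erase_left {x : V} (S T : Finset V) (hx : x ∈ S) :
    edgesBetween G S T = edgesBetween G (S.erase x) T
      + (T.filter (fun b => G.Adj x b)).card := by
  rw [edgesBetween_eq_sum, edgesBetween_eq_sum,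
    ← Finset.sum_erase_add S _ hx]

lemma edgesBetween_erase_right {x : V} (S T : Finset V) (hx : x ∈ T) :
    edgesBetween G S T = edgesBetween G S (T.erase x)
      + (S.filter (fun a => G.Adj a x)).card := by
  rw [edgesBetween_eq_sum', edgesBetween_eq_sum',
    ← Finset.sum_erase_add T _ hx]

lemma edgesBetween_pos {S T : Finset V} (h : 0 < edgesBetween G S T) :
    S.Nonempty ∧ T.Nonempty := by
  obtain ⟨q, hq⟩ := Finset.card_pos.mp h
  rw [Finset.mem_filter, Finset.mem_product] at hq
  exact ⟨⟨q.1, hq.1.1⟩, ⟨q.2, hq.1.2⟩⟩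

lemma clean (k : ℕ) : ∀ (m : ℕ) (A B : Finset V), A.card + B.card ≤ m →
    (k - 1) * (A.card + B.card) < edgesBetween G A B →
    ∃ A' B', A' ⊆ A ∧ B' ⊆ B ∧ A'.Nonempty ∧ B'.Nonempty ∧
      (∀ a ∈ A', k ≤ (B'.filter (fun b => G.Adj a b)).card) ∧
      (∀ b ∈ B', k ≤ (A'.filter (fun a => G.Adj a b)).card) := by
  intro m
  induction m with
  | zero =>
    intro A B hm hE
    have hA : A = ∅ := Finset.card_eq_zero.mp (by omega)
    have hB : B = ∅ := Finset.card_eq_zero.mp (by omega)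
    subst hA; subst hB
    have h0 : (0:ℕ) < edgesBetween G (∅ : Finset V) (∅ : Finset V) := by
      simpa using hE
    simpa using (edgesBetween_pos G h0).1
  | succ m ih =>
    intro A B hm hE
    by_cases hA : ∀ a ∈ A, k ≤ (B.filter (fun b => G.Adj a b)).card
    · by_cases hB : ∀ b ∈ B, k ≤ (A.filter (fun a => G.Adj a b)).card
      · have hpos := edgesBetween_pos G (lt_of_le_of_lt (Nat.zero_le _) hE)
        exact ⟨A, B, subset_rfl, subset_rfl, hpos.1, hpos.2, hA, hB⟩
      · push_neg at hB
        obtain ⟨b, hbB, hb⟩ := hB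
        have hsplit := edgesBetween_erase_right G A B hbB
        have hcard : B.card = (B.erase b).card + 1 := by
          rw [Finset.card_erase_of_mem hbB]
          have : 0 < B.card := Finset.card_pos.mpr ⟨b, hbB⟩
          omega
        have hfle : (A.filter (fun a => G.Adj a b)).card ≤ k - 1 := by omega
        have key : (k - 1) * (A.card + (B.erase b).card) < edgesBetween G A (B.erase b) := by
          have e1 : (k-1) * (A.card + B.card)
              = (k-1) * (A.card + (B.erase b).card) + (k-1) := by
            rw [hcard]; ring
          rw [e1, hsplit] at hE
          set t := (k-1) * (A.card + (B.erase b).card)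
          omega
        obtain ⟨A', B', h1, h2, h3⟩ := ih A (B.erase b) (by omega) key
        exact ⟨A', B', h1, h2.trans (Finset.erase_subset _ _), h3⟩
    · push_neg at hA
      obtain ⟨a, haA, ha⟩ := hA
      have hsplit := edgesBetween_erase_left G A B haA
      have hcard : A.card = (A.erase a).card + 1 := by
        rw [Finset.card_erase_of_mem haA]
        have : 0 < A.card := Finset.card_pos.mpr ⟨a, haA⟩
        omega
      have hfle : (B.filter (fun b => G.Adj a b)).card ≤ k - 1 := by omega
      have key : (k - 1) * ((A.erase a).card + B.card) < edgesBetween G (A.erase a) B := by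
        have e1 : (k-1) * (A.card + B.card)
            = (k-1) * ((A.erase a).card + B.card) + (k-1) := by
          rw [hcard]; ring
        rw [e1, hsplit] at hE
        set t := (k-1) * ((A.erase a).card + B.card)
        omega
      obtain ⟨A', B', h1, h2, h3⟩ := ih (A.erase a) B (by omega) key
      exact ⟨A', B', h1.trans (Finset.erase_subset _ _), h2, h3⟩

end Helpers

section Leaf
variable {α : Type*}

lemma isPath_concat {F : SimpleGraph α} {a y b : α} {p : F.Walk a y}
    (hp : p.IsPath) (h : F.Adj y b) (hb : b ∉ p.support) : (p.concat h).IsPath := by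
  rw [← SimpleGraph.Walk.isPath_reverse_iff, SimpleGraph.Walk.reverse_concat]
  exact hp.reverse.cons (by
    rw [SimpleGraph.Walk.support_reverse, List.mem_reverse]; exact hb)

lemma exists_degree_le_one [Fintype α] [DecidableEq α] (F : SimpleGraph α)
    [DecidableRel F.Adj] (hac : F.IsAcyclic) (hne : Nonempty α) :
    ∃ v, F.degree v ≤ 1 := by
  classical
  by_contra hcon
  push_neg at hcon
  obtain ⟨a₀⟩ := hne
  set N := Fintype.card α with hN
  set P : ℕ → Prop := fun n => ∃ (a b : α) (w : F.Walk a b), w.IsPath ∧ w.length = n with hP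
  have h0 : P 0 := ⟨a₀, a₀, SimpleGraph.Walk.nil, SimpleGraph.Walk.IsPath.nil, rfl⟩
  set M := Nat.findGreatest P N with hM
  have hMP : P M := Nat.findGreatest_spec (Nat.zero_le N) h0
  have hmax : ∀ n, P n → n ≤ M := by
    intro n hn
    obtain ⟨a, b, w, hw, hlen⟩ := hn
    have hlt : n < N := hlen ▸ hw.length_lt
    exact Nat.le_findGreatest (le_of_lt hlt) ⟨a, b, w, hw, hlen⟩
  obtain ⟨a, b, w, hw, hlen⟩ := hMP
  have hmem : ∀ y, F.Adj b y → y ∈ w.support := by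
    intro y hy
    by_contra hns
    have hpath : (w.concat hy).IsPath := isPath_concat hw hy hns
    have := hmax (M + 1) ⟨a, y, w.concat hy, hpath, by
      rw [SimpleGraph.Walk.length_concat, hlen]⟩
    omega
  have hlast : ∀ y (hy : F.Adj b y), ∃ (q : F.Walk a y),
      q.IsPath ∧ (q.concat hy.symm : F.Walk a b) = w := by
    intro y hy
    have hys := hmem y hy
    have hyb : y ≠ b := fun h => F.irrefl (h ▸ hy)
    set q := w.takeUntil y hys with hq
    have hqpath : q.IsPath := hw.takeUntil hys
    have hbq : b ∉ q.support := by
      have hspec := w.take_spec hys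
      have hnd : w.support.Nodup := hw.support_nodup
      rw [← hspec, SimpleGraph.Walk.support_append] at hnd
      have hbd : b ∈ (w.dropUntil y hys).support.tail := by
        have hb2 : b ∈ (w.dropUntil y hys).support := SimpleGraph.Walk.end_mem_support _
        rw [SimpleGraph.Walk.support_eq_cons (w.dropUntil y hys)] at hb2
        rcases List.mem_cons.mp hb2 with h | h
        · exact absurd h hyb.symm
        · exact h
      exact fun hbq => (List.disjoint_of_nodup_append hnd) hbq hbd
    have hcp : (q.concat hy.symm).IsPath := isPath_concat hqpath hy.symm hbq
    have : (⟨q.concat hy.symm, hcp⟩ : F.Path a b) = ⟨w, hw⟩ := hac.path_unique _ _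
    exact ⟨q, hqpath, congrArg Subtype.val this⟩
  have hdeg : 1 < (F.neighborFinset b).card := by
    rw [SimpleGraph.card_neighborFinset_eq_degree]; exact hcon b
  obtain ⟨y₁, hy₁, y₂, hy₂, hne12⟩ := Finset.one_lt_card.mp hdeg
  rw [SimpleGraph.mem_neighborFinset] at hy₁ hy₂
  obtain ⟨q₁, hq₁, he₁⟩ := hlast y₁ hy₁
  obtain ⟨q₂, hq₂, he₂⟩ := hlast y₂ hy₂
  have hedges : q₁.edges ++ [s(y₁, b)] = q₂.edges ++ [s(y₂, b)] := by
    have e1 : (q₁.concat hy₁.symm).edges = (q₂.concat hy₂.symm).edges := by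
      rw [he₁, he₂]
    rwa [SimpleGraph.Walk.edges_concat, SimpleGraph.Walk.edges_concat,
      List.concat_eq_append, List.concat_eq_append] at e1
  have hlen12 : q₁.edges.length = q₂.edges.length := by
    have l1 : q₁.length + 1 = M := by
      rw [← hlen, ← he₁, SimpleGraph.Walk.length_concat]
    have l2 : q₂.length + 1 = M := by
      rw [← hlen, ← he₂, SimpleGraph.Walk.length_concat]
    rw [SimpleGraph.Walk.length_edges, SimpleGraph.Walk.length_edges]
    omega
  have := (List.append_inj hedges hlen12).2
  simp only [List.cons.injEq] at this
  exact hne12 (Sym2.congr_left.mp this.1)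

end Leaf

lemma exists_leaf_finset {p : ℕ} (F : SimpleGraph (Fin p)) [DecidableRel F.Adj] (v₀ : Fin p)
    (hforest : (SimpleGraph.induce {u : Fin p | u ≠ v₀} F).IsAcyclic)
    (s : Finset (Fin p)) (hs : s.Nonempty) (hv : v₀ ∉ s) :
    ∃ ℓ ∈ s, (s.filter (fun x => F.Adj ℓ x)).card ≤ 1 := by
  classical
  set H := SimpleGraph.induce (↑s : Set (Fin p)) F with hH
  have hHac : H.IsAcyclic := by
    intro v c hc
    let φ : H →g SimpleGraph.induce {u : Fin p | u ≠ v₀} F :=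
      ⟨fun x => ⟨x.1, fun h => hv (by rw [← h]; exact x.2)⟩, fun {x y} h => h⟩
    have hinj : Function.Injective φ := by
      intro x y hxy
      have h2 : (φ x).val = (φ y).val := congrArg Subtype.val hxy
      exact Subtype.ext h2
    exact hforest (c.map φ) ((SimpleGraph.Walk.map_isCycle_iff_of_injective hinj).mpr hc)
  have hne : Nonempty (↑s : Set (Fin p)) := by
    obtain ⟨x, hx⟩ := hs
    exact ⟨⟨x, by exact hx⟩⟩
  obtain ⟨v, hv1⟩ := exists_degree_le_one H hHac hne
  refine ⟨v.1, v.2, ?_⟩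
  have hset : s.filter (fun x => F.Adj v.1 x)
      = (H.neighborFinset v).map ⟨Subtype.val, Subtype.val_injective⟩ := by
    ext x
    simp only [Finset.mem_filter, Finset.mem_map, SimpleGraph.mem_neighborFinset,
      Function.Embedding.coeFn_mk]
    constructor
    · rintro ⟨hxs, hadj⟩
      exact ⟨⟨x, hxs⟩, hadj, rfl⟩
    · rintro ⟨⟨y, hy⟩, hadj, rfl⟩
      exact ⟨hy, hadj⟩
  rw [hset, Finset.card_map, SimpleGraph.card_neighborFinset_eq_degree]
  exact hv1
lemma embed_forest {V : Type*} [Fintype V] [DecidableEq V] (G : SimpleGraph V)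
    [DecidableRel G.Adj] {p : ℕ} (hp : 2 ≤ p) (F : SimpleGraph (Fin p))
    [DecidableRel F.Adj] (v₀ : Fin p)
    (C : F.Coloring (Fin 2))
    (hforest : (SimpleGraph.induce {u : Fin p | u ≠ v₀} F).IsAcyclic)
    (u : V) (A B : Finset V)
    (hAu : A ⊆ G.neighborFinset u) (huB : u ∉ B)
    (hA : ∀ a ∈ A, p ≤ (B.filter (fun b => G.Adj a b)).card)
    (hB : ∀ b ∈ B, p ≤ (A.filter (fun a => G.Adj a b)).card)
    (hAne : A.Nonempty) :
    ∃ f : Fin p → V, Function.Injective f ∧ ∀ a b, F.Adj a b → G.Adj (f a) (f b) := by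
  classical
  set side : Fin p → Finset V := fun w => if C w = C v₀ then B else A with hside
  obtain ⟨a₀, ha₀⟩ := hAne
  have hBcard : p ≤ B.card :=
    le_trans (hA a₀ ha₀) (Finset.card_le_card (Finset.filter_subset _ _))
  have hBne : B.Nonempty := Finset.card_pos.mp (by omega)
  obtain ⟨b₀, hb₀⟩ := hBne
  have hAcard : p ≤ A.card :=
    le_trans (hB b₀ hb₀) (Finset.card_le_card (Finset.filter_subset _ _))
  have hsidecard : ∀ w, p ≤ (side w).card := by
    intro w
    rw [hside]
    dsimp only
    split <;> assumption
  have huside : ∀ w, u ∉ side w := by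
    intro w
    rw [hside]
    dsimp only
    split
    · exact huB
    · intro hu
      exact G.irrefl ((SimpleGraph.mem_neighborFinset _ _ _).mp (hAu hu))
  have fin2 : ∀ a b c : Fin 2, a ≠ b → b ≠ c → a = c := by decide
  have claim : ∀ (m : ℕ) (s : Finset (Fin p)), s.card = m → v₀ ∉ s →
      ∃ f : Fin p → V, Set.InjOn f ↑s ∧ (∀ w ∈ s, f w ∈ side w) ∧
        (∀ a ∈ s, ∀ b ∈ s, F.Adj a b → G.Adj (f a) (f b)) := by
    intro m
    induction m with
    | zero =>
      intro s hcard _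
      refine ⟨fun _ => u, ?_, ?_, ?_⟩ <;> simp [Finset.card_eq_zero.mp hcard]
    | succ m ih =>
      intro s hcard hv₀
      have hsne : s.Nonempty := Finset.card_pos.mp (by omega)
      obtain ⟨ℓ, hℓs, hleaf⟩ := exists_leaf_finset F v₀ hforest s hsne hv₀
      set s' := s.erase ℓ with hs'
      have hcard' : s'.card = m := by
        rw [hs', Finset.card_erase_of_mem hℓs]; omega
      obtain ⟨f, hinj, hmem, hadj⟩ := ih s' hcard'
        (fun h => hv₀ (Finset.mem_of_mem_erase h))
      set used := s'.image f with hused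
      have husedcard : used.card ≤ p - 2 := by
        have h1 : used.card ≤ s'.card := Finset.card_image_le
        have h2 : s.card ≤ p - 1 := by
          have hsub : s ⊆ Finset.univ.erase v₀ := fun x hx =>
            Finset.mem_erase.mpr ⟨fun h => hv₀ (h ▸ hx), Finset.mem_univ x⟩
          calc s.card ≤ (Finset.univ.erase v₀).card := Finset.card_le_card hsub
            _ = p - 1 := by
              rw [Finset.card_erase_of_mem (Finset.mem_univ _)]; simp
        omega
      have hmemS' : ∀ x : Fin p, x ∈ s → x ≠ ℓ → x ∈ s' :=
        fun x hx hne => Finset.mem_erase.mpr ⟨hne, hx⟩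
      have finish : ∀ t : V, t ∈ side ℓ → t ∉ used →
          (∀ x ∈ s', F.Adj ℓ x → G.Adj t (f x)) →
          ∃ f : Fin p → V, Set.InjOn f ↑s ∧ (∀ w ∈ s, f w ∈ side w) ∧
            (∀ a ∈ s, ∀ b ∈ s, F.Adj a b → G.Adj (f a) (f b)) := by
        intro t ht htu hadjt
        have htf : ∀ x ∈ s', t ≠ f x := by
          intro x hx h
          exact htu (h ▸ Finset.mem_image_of_mem f hx)
        refine ⟨Function.update f ℓ t, ?_, ?_, ?_⟩
        · intro x hx y hy hxy
          rw [Finset.mem_coe] at hx hy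
          by_cases hxℓ : x = ℓ <;> by_cases hyℓ : y = ℓ
          · rw [hxℓ, hyℓ]
          · exfalso
            subst hxℓ
            rw [Function.update_self, Function.update_of_ne hyℓ] at hxy
            exact htf y (hmemS' y hy hyℓ) hxy
          · exfalso
            subst hyℓ
            rw [Function.update_self, Function.update_of_ne hxℓ] at hxy
            exact htf x (hmemS' x hx hxℓ) hxy.symm
          · rw [Function.update_of_ne hxℓ, Function.update_of_ne hyℓ] at hxy
            exact hinj (Finset.mem_coe.mpr (hmemS' x hx hxℓ))
              (Finset.mem_coe.mpr (hmemS' y hy hyℓ)) hxy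
        · intro w hw
          by_cases hwℓ : w = ℓ
          · subst hwℓ
            rw [Function.update_self]
            exact ht
          · rw [Function.update_of_ne hwℓ]
            exact hmem w (hmemS' w hw hwℓ)
        · intro x hx y hy hadjxy
          by_cases hxℓ : x = ℓ <;> by_cases hyℓ : y = ℓ
          · rw [hxℓ, hyℓ] at hadjxy
            exact absurd hadjxy (F.irrefl)
          · subst hxℓ
            rw [Function.update_self, Function.update_of_ne hyℓ]
            exact hadjt y (hmemS' y hy hyℓ) hadjxy
          · subst hyℓ
            rw [Function.update_self, Function.update_of_ne hxℓ]
            exact (hadjt x (hmemS' x hx hxℓ) hadjxy.symm).symm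
          · rw [Function.update_of_ne hxℓ, Function.update_of_ne hyℓ]
            exact hadj x (hmemS' x hx hxℓ) y (hmemS' y hy hyℓ) hadjxy
      by_cases hnb : ∃ y ∈ s', F.Adj ℓ y
      · obtain ⟨y, hys', hy⟩ := hnb
        have hCne : C ℓ ≠ C y := C.valid hy
        have hfy : f y ∈ side y := hmem y hys'
        have hbig : p ≤ ((side ℓ).filter (fun t => G.Adj (f y) t)).card := by
          by_cases hCy : C y = C v₀
          · have hsy : side y = B := by rw [hside]; simp [hCy]
            have hsl : side ℓ = A := by
              rw [hside]
              simp [show ¬(C ℓ = C v₀) from fun h => hCne (h.trans hCy.symm)]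
            rw [hsl]
            have heq : A.filter (fun t => G.Adj (f y) t)
                = A.filter (fun a => G.Adj a (f y)) :=
              Finset.filter_congr (fun x _ => by rw [G.adj_comm])
            rw [heq]
            exact hB (f y) (hsy ▸ hfy)
          · have hsy : side y = A := by rw [hside]; simp [hCy]
            have hsl : side ℓ = B := by
              rw [hside]; simp [fin2 (C ℓ) (C y) (C v₀) hCne hCy]
            rw [hsl]
            exact hA (f y) (hsy ▸ hfy)
        have hbound : s.filter (fun x => F.Adj ℓ x) = {y} := by
          apply Finset.eq_singleton_iff_unique_mem.mpr
          constructor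
          · exact Finset.mem_filter.mpr ⟨Finset.mem_of_mem_erase hys', hy⟩
          · intro x hx
            exact Finset.card_le_one.mp hleaf x hx y
              (Finset.mem_filter.mpr ⟨Finset.mem_of_mem_erase hys', hy⟩)
        have hTne : (((side ℓ).filter (fun t => G.Adj (f y) t)) \ used).Nonempty := by
          apply Finset.card_pos.mp
          have h1 := Finset.le_card_sdiff used ((side ℓ).filter (fun t => G.Adj (f y) t))
          omega
        obtain ⟨t, hT⟩ := hTne
        rw [Finset.mem_sdiff, Finset.mem_filter] at hT
        apply finish t hT.1.1 hT.2
        intro x hx hadjx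
        have hxy : x = y := by
          have hx1 : x ∈ s.filter (fun z => F.Adj ℓ z) :=
            Finset.mem_filter.mpr ⟨Finset.mem_of_mem_erase hx, hadjx⟩
          rw [hbound] at hx1
          exact Finset.mem_singleton.mp hx1
        subst hxy
        exact hT.1.2.symm
      · push_neg at hnb
        have hTne : ((side ℓ) \ used).Nonempty := by
          apply Finset.card_pos.mp
          have h1 := Finset.le_card_sdiff used (side ℓ)
          have h2 := hsidecard ℓ
          omega
        obtain ⟨t, hT⟩ := hTne
        rw [Finset.mem_sdiff] at hT
        exact finish t hT.1 hT.2 (fun x hx hadjx => absurd hadjx (hnb x hx))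
  obtain ⟨f, hinj, hmem, hadj⟩ := claim (Finset.univ.erase v₀).card
    (Finset.univ.erase v₀) rfl (by simp)
  have hmem' : ∀ y : Fin p, y ≠ v₀ → f y ∈ side y := fun y hy =>
    hmem y (Finset.mem_erase.mpr ⟨hy, Finset.mem_univ y⟩)
  refine ⟨Function.update f v₀ u, ?_, ?_⟩
  · intro x y hxy
    by_cases hx : x = v₀ <;> by_cases hy : y = v₀
    · rw [hx, hy]
    · exfalso
      rw [hx, Function.update_self, Function.update_of_ne hy] at hxy
      exact huside y (hxy ▸ hmem' y hy)
    · exfalso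
      rw [hy, Function.update_self, Function.update_of_ne hx] at hxy
      exact huside x (hxy.symm ▸ hmem' x hx)
    · rw [Function.update_of_ne hx, Function.update_of_ne hy] at hxy
      exact hinj (Finset.mem_coe.mpr (Finset.mem_erase.mpr ⟨hx, Finset.mem_univ x⟩))
        (Finset.mem_coe.mpr (Finset.mem_erase.mpr ⟨hy, Finset.mem_univ y⟩)) hxy
  · intro x y hxy
    by_cases hx : x = v₀ <;> by_cases hy : y = v₀
    · rw [hx, hy] at hxy
      exact absurd hxy (F.irrefl)
    · rw [hx] at hxy ⊢
      rw [Function.update_self, Function.update_of_ne hy]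
      have hCy : ¬(C y = C v₀) := fun h => (C.valid hxy) (h.symm)
      have hsy : side y = A := by rw [hside]; simp [hCy]
      have hyA := hmem' y hy
      rw [hsy] at hyA
      exact (SimpleGraph.mem_neighborFinset _ _ _).mp (hAu hyA)
    · rw [hy] at hxy ⊢
      rw [Function.update_self, Function.update_of_ne hx]
      have hCx : ¬(C x = C v₀) := fun h => (C.valid hxy.symm) (h.symm)
      have hsx : side x = A := by rw [hside]; simp [hCx]
      have hxA := hmem' x hx
      rw [hsx] at hxA
      exact ((SimpleGraph.mem_neighborFinset _ _ _).mp (hAu hxA)).symm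
    · rw [Function.update_of_ne hx, Function.update_of_ne hy]
      exact hadj x (Finset.mem_erase.mpr ⟨hx, Finset.mem_univ x⟩)
        y (Finset.mem_erase.mpr ⟨hy, Finset.mem_univ y⟩) hxy

open Classical in
theorem stmt_13 {V : Type*} [Fintype V] (G : SimpleGraph V)
    (p : ℕ) (F : SimpleGraph (Fin p)) (v₀ : Fin p)
    (hbip : F.Colorable 2)
    (hforest : (SimpleGraph.induce {u : Fin p | u ≠ v₀} F).IsAcyclic)
    (hfree : ¬ ∃ f : Fin p → V, Function.Injective f ∧
      ∀ a b, F.Adj a b → G.Adj (f a) (f b))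
    (n : ℕ) (hn : Fintype.card V = n) (u : V) :
    (edgesBetween G (G.neighborFinset u) (G.neighborFinset u) : ℝ) +
        (edgesBetween G (G.neighborFinset u)
          (Finset.univ.filter (fun w => G.dist u w = 2)) : ℝ) ≤
      2 * (2 * ((p : ℝ) - 1)) * (G.degree u : ℝ) + 2 * ((p : ℝ) - 1) * ((n : ℝ) - 1) ∧
    2 * (2 * ((p : ℝ) - 1)) * (G.degree u : ℝ) + 2 * ((p : ℝ) - 1) * ((n : ℝ) - 1) ≤
      3 * (2 * ((p : ℝ) - 1)) * (n : ℝ) := by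
  classical
  have hp : 2 ≤ p := by
    by_contra hlt
    push_neg at hlt
    interval_cases p
    · exact hfree ⟨Fin.elim0, fun a => a.elim0, fun a => a.elim0⟩
    · refine hfree ⟨fun _ => u, fun a b _ => Subsingleton.elim a b, fun a b hab => ?_⟩
      rw [Subsingleton.elim a b] at hab
      exact absurd hab (F.irrefl)
  have hn1 : 1 ≤ n := by
    have h0 : 0 < Fintype.card V := Fintype.card_pos_iff.mpr ⟨u⟩
    omega
  set U := G.neighborFinset u with hU
  set W := Finset.univ.filter (fun w => G.dist u w = 2) with hW
  have hUcard : U.card = G.degree u := G.card_neighborFinset_eq_degree u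
  have hWsub : W ⊆ Finset.univ.erase u := by
    intro w hw
    rw [hW, Finset.mem_filter] at hw
    refine Finset.mem_erase.mpr ⟨?_, Finset.mem_univ _⟩
    intro h
    rw [h, SimpleGraph.dist_self] at hw
    omega
  have hWcard : W.card ≤ n - 1 := by
    calc W.card ≤ (Finset.univ.erase u).card := Finset.card_le_card hWsub
      _ = n - 1 := by
        rw [Finset.card_erase_of_mem (Finset.mem_univ _), Finset.card_univ, hn]
  have hdeg : G.degree u ≤ n - 1 := by
    have := G.degree_lt_card_verts u
    omega
  set E1 := edgesBetween G U U with hE1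
  set E2 := edgesBetween G U W with hE2
  set c : ℕ := 2 * (p - 1) with hc
  have huU : u ∉ U := fun h => G.irrefl ((SimpleGraph.mem_neighborFinset _ _ _).mp h)
  have huW : u ∉ W := fun h => (Finset.mem_erase.mp (hWsub h)).1 rfl
  obtain ⟨C⟩ := hbip
  have main : E1 + E2 ≤ 2 * c * G.degree u + c * (n - 1) := by
    by_contra hcon
    push_neg at hcon
    have hkey : c * U.card + c * U.card + c * W.card < E1 + E2 := by
      calc c * U.card + c * U.card + c * W.card
          ≤ 2 * c * G.degree u + c * (n - 1) := by
            rw [hUcard]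
            have h1 : c * W.card ≤ c * (n - 1) := Nat.mul_le_mul_left _ hWcard
            have h2 : c * G.degree u + c * G.degree u = 2 * c * G.degree u := by ring
            omega
        _ < E1 + E2 := hcon
    by_cases h1 : c * U.card < E1
    · have h1' : (p - 1) * (U.card + U.card) < edgesBetween G U U := by
        have e : (p - 1) * (U.card + U.card) = c * U.card := by rw [hc]; ring
        rw [e]
        exact h1
      obtain ⟨A', B', hA'U, hB'U, hA'ne, _, hdA, hdB⟩ :=
        clean G p (U.card + U.card) U U le_rfl h1'
      exact absurd (embed_forest G hp F v₀ C hforest u A' B' hA'U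
        (fun h => huU (hB'U h)) hdA hdB hA'ne) hfree
    · push_neg at h1
      have h2 : (p - 1) * (U.card + W.card) < edgesBetween G U W := by
        have ha : c * U.card + c * W.card < E2 := by omega
        calc (p - 1) * (U.card + W.card) ≤ c * (U.card + W.card) :=
              Nat.mul_le_mul_right _ (by omega)
          _ = c * U.card + c * W.card := by ring
          _ < E2 := ha
      obtain ⟨A', B', hA'U, hB'W, hA'ne, _, hdA, hdB⟩ :=
        clean G p (U.card + W.card) U W le_rfl h2
      exact absurd (embed_forest G hp F v₀ C hforest u A' B' hA'U
        (fun h => huW (hB'W h)) hdA hdB hA'ne) hfree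
  have hcast : ((2 * c * G.degree u + c * (n - 1) : ℕ) : ℝ)
      = 2 * (2 * ((p : ℝ) - 1)) * (G.degree u : ℝ) + 2 * ((p : ℝ) - 1) * ((n : ℝ) - 1) := by
    have hp1 : (1:ℕ) ≤ p := by omega
    push_cast [Nat.cast_sub hp1, Nat.cast_sub hn1, hc]
    ring
  constructor
  · calc (E1 : ℝ) + (E2 : ℝ) = ((E1 + E2 : ℕ) : ℝ) := by push_cast; ring
      _ ≤ ((2 * c * G.degree u + c * (n - 1) : ℕ) : ℝ) := by exact_mod_cast main
      _ = _ := hcast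
  · have hp1 : (1:ℝ) ≤ (p:ℝ) - 1 := by
      have : (2:ℝ) ≤ (p:ℝ) := by exact_mod_cast hp
      linarith
    have hdn : (G.degree u : ℝ) ≤ (n:ℝ) - 1 := by
      have h4 : ((G.degree u : ℕ) : ℝ) ≤ ((n - 1 : ℕ) : ℝ) := by exact_mod_cast hdeg
      rwa [Nat.cast_sub hn1, Nat.cast_one] at h4
    have hnn : (1:ℝ) ≤ (n:ℝ) := by exact_mod_cast hn1
    nlinarith [mul_nonneg (by linarith : (0:ℝ) ≤ (p:ℝ) - 1)
        (by linarith : (0:ℝ) ≤ (n:ℝ) - 1 - (G.degree u : ℝ)),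
      mul_nonneg (by linarith : (0:ℝ) ≤ (p:ℝ) - 1) (by linarith : (0:ℝ) ≤ (n:ℝ))]
end

section
/- For n ≡ 2 (mod 4) sufficiently large, the adjacency spectral radius of G = K₂ + ((n−2)/4)·K_{1,3} is strictly greater than the adjacency spectral radius of H = K₂ + (P₈ ∪ ((n−10)/4)·P₄). -/
/-!
Both graphs are `K₂` joined with a disjoint union `F` of small components. Let `r ≥ 12` solve
`(r - 1)(r² - 3) = (n - 2)(2r + 3)`, the cubic `p_G`. On `G` a positive eigenvector for `r` is
explicit: a constant `a` on the two dominating vertices and `2a (r - B)⁻¹ 𝟙` on each star, so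
`r ≤ λ₁(G)`. On `H` a positive vector `w` built the same way from the resolvents of the paths
satisfies `A w < r w` entrywise, so by the Collatz–Wielandt bound every eigenvalue of `H` is
`< r`. The dominating rows are where the comparison happens: `K_{1,3}` has more walks of
length two than `P₄` (12 against 10), and over `(n - 10)/4` components this outweighs the one
extra edge of `P₈` against two stars.
-/

open Finset SimpleGraph

/-- The graph K₂ + ((n−2)/4)·K_{1,3} on `Fin n` (n ≡ 2 mod 4): vertices 0,1
are dominating, and the remaining n−2 vertices are partitioned into
consecutive groups of 4, each inducing a star K_{1,3} centered at its first
vertex. -/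
def splitStarsGraph (n : ℕ) : SimpleGraph (Fin n) :=
  SimpleGraph.fromRel (fun u v =>
    u.val < 2 ∨ (2 ≤ u.val ∧ 2 ≤ v.val ∧ (u.val - 2) / 4 = (v.val - 2) / 4 ∧
      (u.val - 2) % 4 = 0))

/-- The graph K₂ + (P₈ ∪ ((n−10)/4)·P₄) on `Fin n` (n ≡ 2 mod 4): vertices
0,1 are dominating, vertices 2..9 induce a path P₈, and the remaining
vertices are partitioned into consecutive groups of 4, each inducing a
path P₄. -/
def pathsGraph (n : ℕ) : SimpleGraph (Fin n) :=
  SimpleGraph.fromRel (fun u v =>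
    u.val < 2 ∨ (2 ≤ u.val ∧ u.val + 1 = v.val ∧ v.val ≤ 9) ∨
      (10 ≤ u.val ∧ u.val + 1 = v.val ∧ (u.val - 10) / 4 = (v.val - 10) / 4))

noncomputable instance (n : ℕ) : DecidableRel (splitStarsGraph n).Adj :=
  Classical.decRel _

noncomputable instance (n : ℕ) : DecidableRel (pathsGraph n).Adj :=
  Classical.decRel _

open Matrix

theorem Matrix.lt_of_mulVec_eq_smul_of_mulVec_lt {ι : Type*} [Fintype ι] {A : Matrix ι ι ℝ}
    (hA : ∀ i j, 0 ≤ A i j) {w : ι → ℝ} (hw : ∀ i, 0 < w i) {r : ℝ}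
    (hAw : ∀ i, (A *ᵥ w) i < r * w i) {μ : ℝ} {y : ι → ℝ} (hy0 : y ≠ 0)
    (hy : A *ᵥ y = μ • y) : μ < r := by
  obtain ⟨j, hj⟩ := Function.ne_iff.mp hy0
  obtain ⟨i, -, hi⟩ := exists_max_image univ (fun i => |y i| / w i) ⟨j, mem_univ j⟩
  set t := |y i| / w i
  have hle : ∀ k, |y k| ≤ t * w k := fun k => (div_le_iff₀ (hw k)).1 (hi k (mem_univ k))
  have ht : 0 < t := pos_of_mul_pos_left ((abs_pos.2 hj).trans_le (hle j)) (hw j).le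
  have hyt : t * w i = |y i| := div_mul_cancel₀ _ (hw i).ne'
  have hyi : 0 < |y i| := hyt ▸ mul_pos ht (hw i)
  have hμ : |μ| * |y i| < r * |y i| :=
    calc |μ| * |y i| = |∑ k, A i k * y k| := by
          rw [← abs_mul, ← smul_eq_mul, ← Pi.smul_apply, ← hy]; rfl
      _ ≤ ∑ k, A i k * (t * w k) := by
          refine (abs_sum_le_sum_abs _ _).trans (sum_le_sum fun k _ => ?_)
          rw [abs_mul, abs_of_nonneg (hA i k)]
          exact mul_le_mul_of_nonneg_left (hle k) (hA i k)
      _ = t * (A *ᵥ w) i := by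
          rw [Matrix.mulVec, dotProduct, mul_sum]
          exact sum_congr rfl fun k _ => by ring
      _ < t * (r * w i) := mul_lt_mul_of_pos_left (hAw i) ht
      _ = r * |y i| := by rw [← hyt]; ring
  exact (le_abs_self μ).trans_lt (lt_of_mul_lt_mul_right hμ hyi.le)

namespace SimpleGraph

variable {α : Type*} [NonAssocSemiring α] {n : ℕ} (G : SimpleGraph (Fin n)) [DecidableRel G.Adj]

theorem adjMatrix_mulVec_apply_eq_sum_list (f : ℕ → α) (i : Fin n) (l : List ℕ)
    (hl : l.Nodup) (hlt : ∀ t ∈ l, t < n) (hadj : ∀ j : Fin n, G.Adj i j ↔ (j : ℕ) ∈ l) :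
    (G.adjMatrix α *ᵥ fun j => f j) i = (l.map f).sum := by
  have : (G.neighborFinset i).map Fin.valEmbedding = l.toFinset := by
    ext t
    simp only [mem_map, mem_neighborFinset, Fin.valEmbedding_apply, List.mem_toFinset, hadj]
    exact ⟨by rintro ⟨j, hj, rfl⟩; exact hj, fun ht => ⟨⟨t, hlt t ht⟩, ht, rfl⟩⟩
  rw [adjMatrix_mulVec_apply, ← List.sum_toFinset f hl, ← this, sum_map]
  rfl

theorem adjMatrix_mulVec_apply_of_forall_adj (x : Fin n → α) (i : Fin n)
    (hadj : ∀ j, j ≠ i → G.Adj i j) : (G.adjMatrix α *ᵥ x) i + x i = ∑ j, x j := by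
  have : G.neighborFinset i = univ.erase i := by
    ext j
    simp only [mem_neighborFinset, mem_erase, mem_univ, and_true]
    exact ⟨fun h => G.ne_of_adj h |>.symm, hadj j⟩
  rw [adjMatrix_mulVec_apply, this, sum_erase_add _ _ (mem_univ i)]

end SimpleGraph

theorem Finset.sum_range_add_mul_of_periodic {M : Type*} [AddCommMonoid M] (f : ℕ → M)
    (c p k : ℕ) (hf : ∀ t, f (c + (t + p)) = f (c + t)) :
    ∑ t ∈ range (c + p * k), f t = ∑ t ∈ range c, f t + k • ∑ t ∈ range p, f (c + t) := by
  have hper : ∀ k t, f (c + (p * k + t)) = f (c + t) := by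
    intro k
    induction k with
    | zero => simp
    | succ k ih => intro t; rw [mul_add_one, add_right_comm, hf, ih]
  rw [sum_range_add]
  congr 1
  induction k with
  | zero => simp
  | succ k ih => rw [mul_add_one, sum_range_add, ih, succ_nsmul]; simp only [hper]

theorem splitStarsGraph_adj_iff {n : ℕ} (i j : Fin n) :
    (splitStarsGraph n).Adj i j ↔ (i : ℕ) ≠ j ∧ ((i : ℕ) < 2 ∨ (j : ℕ) < 2 ∨
      (2 ≤ (i : ℕ) ∧ 2 ≤ (j : ℕ) ∧ ((i : ℕ) - 2) / 4 = ((j : ℕ) - 2) / 4 ∧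
        ((i : ℕ) % 4 = 2 ∨ (j : ℕ) % 4 = 2))) := by
  simp only [splitStarsGraph, fromRel_adj, ne_eq, Fin.ext_iff]
  omega

/-- With `a = r² - 3` on the two dominating vertices, the values on each star are
`2a (r - B)⁻¹ 𝟙`, `B` the adjacency matrix of `K_{1,3}`. -/
noncomputable def starsTestVec (r : ℝ) (t : ℕ) : ℝ :=
  if t < 2 then r ^ 2 - 3 else if t % 4 = 2 then 2 * (r + 3) else 2 * (r + 1)

theorem starsTestVec_pos {r : ℝ} (hr : 2 ≤ r) (t : ℕ) : 0 < starsTestVec r t := by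
  unfold starsTestVec
  split_ifs <;> nlinarith

theorem sum_range_starsTestVec (r : ℝ) (k : ℕ) :
    ∑ t ∈ range (2 + 4 * k), starsTestVec r t = 2 * (r ^ 2 - 3) + k * (8 * r + 12) := by
  rw [sum_range_add_mul_of_periodic _ _ _ _ fun t => by
    simp (disch := omega) only [starsTestVec, if_neg, Nat.add_mod_right, ← add_assoc]]
  simp (disch := omega) only [sum_range_succ, sum_range_zero, starsTestVec, if_pos, if_neg,
    if_true, nsmul_eq_mul]
  ring

theorem splitStarsGraph_mulVec_starsTestVec {n : ℕ} (hn : n % 4 = 2) {r : ℝ}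
    (hr : (r - 1) * (r ^ 2 - 3) = (n - 2) * (2 * r + 3)) :
    (splitStarsGraph n).adjMatrix ℝ *ᵥ (fun j : Fin n => starsTestVec r j)
      = r • fun j : Fin n => starsTestVec r j := by
  funext i
  rw [Pi.smul_apply, smul_eq_mul]
  have hi := i.isLt
  obtain hi2 | hi2 := lt_or_ge (i : ℕ) 2
  · have hrow := adjMatrix_mulVec_apply_of_forall_adj _ (fun j : Fin n => starsTestVec r j) i
      fun j hj => (splitStarsGraph_adj_iff i j).2 ⟨Fin.val_ne_iff.2 hj.symm, Or.inl hi2⟩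
    obtain ⟨k, rfl⟩ : ∃ k, n = 2 + 4 * k := ⟨n / 4, by omega⟩
    rw [Fin.sum_univ_eq_sum_range (starsTestVec r), sum_range_starsTestVec] at hrow
    rw [show starsTestVec r i = r ^ 2 - 3 from if_pos hi2] at hrow ⊢
    push_cast at hr
    linear_combination hrow - hr
  · by_cases hc : (i : ℕ) % 4 = 2
    · rw [adjMatrix_mulVec_apply_eq_sum_list _ _ i [0, 1, i + 1, i + 2, i + 3]
        (by simp; omega) (by simp; omega)
        (fun j => by rw [splitStarsGraph_adj_iff]; simp; omega)]
      simp (disch := omega) only [starsTestVec, if_pos, if_neg, List.map_cons, List.map_nil,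
        List.sum_cons, List.sum_nil]
      ring
    · rw [adjMatrix_mulVec_apply_eq_sum_list _ _ i [0, 1, i - ((i : ℕ) + 2) % 4]
        (by simp; omega) (by simp; omega)
        (fun j => by rw [splitStarsGraph_adj_iff]; simp; omega)]
      simp (disch := omega) only [starsTestVec, if_pos, if_neg, List.map_cons, List.map_nil,
        List.sum_cons, List.sum_nil]
      ring

theorem pathsGraph_adj_iff {n : ℕ} (i j : Fin n) :
    (pathsGraph n).Adj i j ↔ (i : ℕ) ≠ j ∧ ((i : ℕ) < 2 ∨ (j : ℕ) < 2 ∨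
      (2 ≤ (i : ℕ) ∧ (i : ℕ) + 1 = j ∧ (j : ℕ) ≤ 9) ∨
      (2 ≤ (j : ℕ) ∧ (j : ℕ) + 1 = i ∧ (i : ℕ) ≤ 9) ∨
      (10 ≤ (i : ℕ) ∧ (i : ℕ) + 1 = j ∧ (i : ℕ) % 4 ≠ 1) ∨
      (10 ≤ (j : ℕ) ∧ (j : ℕ) + 1 = i ∧ (j : ℕ) % 4 ≠ 1)) := by
  simp only [pathsGraph, fromRel_adj, ne_eq, Fin.ext_iff]
  omega

/-- On each path the values are `2qd (r - B)⁻¹ 𝟙`, `B` the adjacency matrix of the path,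
where `q` and `d` are the factors of the characteristic polynomials of `P₄` and `P₈`
carrying their symmetric eigenvectors. With `qd - 1` on the dominating vertices, every
other row of `A w < r w` then holds with slack exactly `2`. -/
noncomputable def pathsTestVec (r : ℝ) (t : ℕ) : ℝ :=
  let q := r ^ 2 - r - 1
  let d := r ^ 4 - r ^ 3 - 3 * r ^ 2 + 2 * r + 1
  if t < 2 then q * d - 1
  else if t = 2 ∨ t = 9 then 2 * q * (r ^ 3 - 2 * r)
  else if t = 3 ∨ t = 8 then 2 * q * (r ^ 3 + r ^ 2 - 2 * r - 1)
  else if t = 4 ∨ t = 7 then 2 * q * (r ^ 3 + r ^ 2 - r - 1)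
  else if t ≤ 9 then 2 * q * (r ^ 3 + r ^ 2 - r)
  else if t % 4 = 1 ∨ t % 4 = 2 then 2 * d * r
  else 2 * d * (r + 1)

theorem pathsTestVec_pos {r : ℝ} (hr : 12 ≤ r) (t : ℕ) : 0 < pathsTestVec r t := by
  have hq : 100 < r ^ 2 - r - 1 := by nlinarith
  have hd : 100 < r ^ 4 - r ^ 3 - 3 * r ^ 2 + 2 * r + 1 := by nlinarith
  unfold pathsTestVec
  split_ifs <;> nlinarith

theorem sum_range_pathsTestVec (r : ℝ) (k : ℕ) :
    ∑ t ∈ range (10 + 4 * k), pathsTestVec r t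
      = 2 * ((r ^ 2 - r - 1) * (r ^ 4 - r ^ 3 - 3 * r ^ 2 + 2 * r + 1) - 1)
        + 4 * (r ^ 2 - r - 1) * (4 * r ^ 3 + 3 * r ^ 2 - 6 * r - 2)
        + k * (2 * (r ^ 4 - r ^ 3 - 3 * r ^ 2 + 2 * r + 1) * (4 * r + 2)) := by
  rw [sum_range_add_mul_of_periodic _ _ _ _ fun t => by
    simp (disch := omega) only [pathsTestVec, if_neg, Nat.add_mod_right, ← add_assoc]]
  simp (disch := omega) only [sum_range_succ, sum_range_zero, pathsTestVec, if_pos, if_neg,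
    true_or, or_true, if_true, nsmul_eq_mul]
  ring

theorem pathsGraph_mulVec_apply_of_two_le {n : ℕ} (hn : n % 4 = 2) (hn10 : 10 ≤ n)
    (f : ℕ → ℝ) (i : Fin n) (hi2 : 2 ≤ (i : ℕ)) :
    ((pathsGraph n).adjMatrix ℝ *ᵥ fun j : Fin n => f j) i = f 0 + f 1
      + (if (3 ≤ (i : ℕ) ∧ (i : ℕ) ≤ 9) ∨ (10 ≤ (i : ℕ) ∧ (i : ℕ) % 4 ≠ 2) then f (i - 1) else 0)
      + (if (i : ℕ) ≤ 8 ∨ (10 ≤ (i : ℕ) ∧ (i : ℕ) % 4 ≠ 1) then f (i + 1) else 0) := by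
  have hi := i.isLt
  split_ifs
  · rw [adjMatrix_mulVec_apply_eq_sum_list _ _ i [0, 1, i - 1, i + 1] (by simp; omega)
      (by simp; omega) (fun j => by rw [pathsGraph_adj_iff]; simp; omega)]
    simp [add_assoc]
  · rw [adjMatrix_mulVec_apply_eq_sum_list _ _ i [0, 1, i - 1] (by simp; omega)
      (by simp; omega) (fun j => by rw [pathsGraph_adj_iff]; simp; omega)]
    simp [add_assoc]
  · rw [adjMatrix_mulVec_apply_eq_sum_list _ _ i [0, 1, i + 1] (by simp; omega)
      (by simp; omega) (fun j => by rw [pathsGraph_adj_iff]; simp; omega)]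
    simp [add_assoc]
  · omega

theorem pathsGraph_mulVec_pathsTestVec_lt_of_two_le {n : ℕ} (hn : n % 4 = 2) (hn10 : 10 ≤ n)
    (r : ℝ) (i : Fin n) (hi2 : 2 ≤ (i : ℕ)) :
    ((pathsGraph n).adjMatrix ℝ *ᵥ fun j : Fin n => pathsTestVec r j) i
      < r * pathsTestVec r i := by
  rw [pathsGraph_mulVec_apply_of_two_le hn hn10 _ i hi2]
  generalize (i : ℕ) = k at hi2 ⊢
  obtain hk | hk : k ≤ 9 ∨ 10 ≤ k := by omega
  · interval_cases k <;>
    · simp (disch := omega) only [pathsTestVec, if_pos, if_neg, true_or, or_true, if_true]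
      linear_combination (two_pos : (0 : ℝ) < 2)
  · rcases (by omega : k % 4 = 0 ∨ k % 4 = 1 ∨ k % 4 = 2 ∨ k % 4 = 3) with h | h | h | h <;>
    · simp (disch := omega) only [pathsTestVec, if_pos, if_neg, true_or]
      linear_combination (two_pos : (0 : ℝ) < 2)

theorem pathsTestVec_dominating_row_lt {r k : ℝ} (hr12 : 12 ≤ r)
    (hk : 4 * k * (2 * r + 3) ≤ r ^ 3 - r ^ 2 - 19 * r - 21) :
    4 * (r ^ 2 - r - 1) * (4 * r ^ 3 + 3 * r ^ 2 - 6 * r - 2)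
        + k * (2 * (r ^ 4 - r ^ 3 - 3 * r ^ 2 + 2 * r + 1) * (4 * r + 2))
      < (r - 1) * ((r ^ 2 - r - 1) * (r ^ 4 - r ^ 3 - 3 * r ^ 2 + 2 * r + 1) - 1) := by
  have hd : 0 ≤ 2 * (r ^ 4 - r ^ 3 - 3 * r ^ 2 + 2 * r + 1) * (4 * r + 2) := by
    have : 100 < r ^ 2 - r - 1 := by nlinarith
    have : 100 < r ^ 4 - r ^ 3 - 3 * r ^ 2 + 2 * r + 1 := by nlinarith
    exact mul_nonneg (by linarith) (by linarith)
  -- `4 (2r + 3)` times the slack of the inequality when `hk` is an equality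
  have hpoly : 0 < 4 * r ^ 6 - 40 * r ^ 5 - 88 * r ^ 4 + 4 * r ^ 3 + 36 * r ^ 2 - 8 * r + 12 := by
    have : 0 ≤ r ^ 4 * ((r - 12) * (r + 2)) := by
      have : 0 ≤ r - 12 := by linarith
      positivity
    nlinarith
  have hgap : 0 < 4 * (2 * r + 3) *
      ((r - 1) * ((r ^ 2 - r - 1) * (r ^ 4 - r ^ 3 - 3 * r ^ 2 + 2 * r + 1) - 1)
        - 4 * (r ^ 2 - r - 1) * (4 * r ^ 3 + 3 * r ^ 2 - 6 * r - 2)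
        - k * (2 * (r ^ 4 - r ^ 3 - 3 * r ^ 2 + 2 * r + 1) * (4 * r + 2))) := by
    nlinarith [mul_nonneg (sub_nonneg.2 hk) hd]
  linarith [pos_of_mul_pos_right hgap (by linarith)]

theorem pathsGraph_mulVec_pathsTestVec_lt_of_lt_two {n : ℕ} (hn : n % 4 = 2) (hn10 : 10 ≤ n)
    {r : ℝ} (hr12 : 12 ≤ r) (hr : (n - 2) * (2 * r + 3) ≤ (r - 1) * (r ^ 2 - 3))
    (i : Fin n) (hi2 : (i : ℕ) < 2) :
    ((pathsGraph n).adjMatrix ℝ *ᵥ fun j : Fin n => pathsTestVec r j) i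
      < r * pathsTestVec r i := by
  have hrow := adjMatrix_mulVec_apply_of_forall_adj _ (fun j : Fin n => pathsTestVec r j) i
    fun j hj => (pathsGraph_adj_iff i j).2 ⟨Fin.val_ne_iff.2 hj.symm, Or.inl hi2⟩
  obtain ⟨k, rfl⟩ : ∃ k, n = 10 + 4 * k := ⟨n / 4 - 2, by omega⟩
  rw [Fin.sum_univ_eq_sum_range (pathsTestVec r), sum_range_pathsTestVec] at hrow
  have ha : pathsTestVec r i
      = (r ^ 2 - r - 1) * (r ^ 4 - r ^ 3 - 3 * r ^ 2 + 2 * r + 1) - 1 := by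
    simp [pathsTestVec, hi2]
  rw [ha] at hrow ⊢
  push_cast at hr
  linarith [pathsTestVec_dominating_row_lt (k := k) hr12 (by linarith)]

theorem pathsGraph_eigenvalue_lt {n : ℕ} (hn : n % 4 = 2) (hn10 : 10 ≤ n) {r : ℝ}
    (hr12 : 12 ≤ r) (hr : (n - 2) * (2 * r + 3) ≤ (r - 1) * (r ^ 2 - 3)) {μ : ℝ}
    {y : Fin n → ℝ} (hy0 : y ≠ 0) (hy : (pathsGraph n).adjMatrix ℝ *ᵥ y = μ • y) : μ < r := by
  refine Matrix.lt_of_mulVec_eq_smul_of_mulVec_lt (w := fun j : Fin n => pathsTestVec r j)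
    (fun i j => ?_)
    (fun i => pathsTestVec_pos hr12 i) (fun i => ?_) hy0 hy
  · rw [adjMatrix_apply]
    split_ifs <;> norm_num
  · obtain hi | hi := lt_or_ge (i : ℕ) 2
    · exact pathsGraph_mulVec_pathsTestVec_lt_of_lt_two hn hn10 hr12 hr i hi
    · exact pathsGraph_mulVec_pathsTestVec_lt_of_two_le hn hn10 r i hi

theorem exists_starsCubic_root {n : ℕ} (hn : 60 ≤ n) :
    ∃ r : ℝ, 12 ≤ r ∧ (r - 1) * (r ^ 2 - 3) = (n - 2) * (2 * r + 3) := by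
  have hn' : (60 : ℝ) ≤ n := by exact_mod_cast hn
  obtain ⟨r, ⟨hr12, -⟩, hr⟩ := intermediate_value_Icc (by linarith : (12 : ℝ) ≤ n)
    (f := fun x : ℝ => (x - 1) * (x ^ 2 - 3) - (n - 2) * (2 * x + 3)) (by fun_prop)
    (show (0 : ℝ) ∈ Set.Icc _ _ from ⟨by linarith, by nlinarith⟩)
  exact ⟨r, hr12, by linarith⟩

/-- For n ≡ 2 (mod 4) sufficiently large, the adjacency spectral radius of
K₂ + ((n−2)/4)·K_{1,3} is strictly greater than that of
K₂ + (P₈ ∪ ((n−10)/4)·P₄). -/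
theorem stmt_15 :
    ∃ N : ℕ, ∀ n : ℕ, N ≤ n → n % 4 = 2 →
      ∀ (lG lH : ℝ),
        (∃ x : Fin n → ℝ, x ≠ 0 ∧ ((splitStarsGraph n).adjMatrix ℝ).mulVec x = lG • x) →
        (∀ (μ : ℝ) (y : Fin n → ℝ), y ≠ 0 →
          ((splitStarsGraph n).adjMatrix ℝ).mulVec y = μ • y → μ ≤ lG) →
        (∃ x : Fin n → ℝ, x ≠ 0 ∧ ((pathsGraph n).adjMatrix ℝ).mulVec x = lH • x) →
        (∀ (μ : ℝ) (y : Fin n → ℝ), y ≠ 0 →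
          ((pathsGraph n).adjMatrix ℝ).mulVec y = μ • y → μ ≤ lH) →
        lH < lG := by
  refine ⟨60, fun n hn hmod lG lH _ hG hH _ => ?_⟩
  obtain ⟨r, hr12, hr⟩ := exists_starsCubic_root hn
  obtain ⟨y, hy0, hy⟩ := hH
  have hx0 : (fun j : Fin n => starsTestVec r j) ≠ 0 := fun h =>
    (starsTestVec_pos (by linarith) 0).ne' (congrFun h ⟨0, by omega⟩)
  calc lH < r := pathsGraph_eigenvalue_lt hmod (by omega) hr12 hr.ge hy0 hy
    _ ≤ lG := hG r _ hx0 (splitStarsGraph_mulVec_starsTestVec hmod hr)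
end

section
/- Let T be a tree with proper 2-coloring V = A ⊔ B, |A| = k+1 ≤ |B|, such that B contains a vertex of degree at least 3 exactly one of whose neighbors is not a leaf. Then the complete bipartite graph K_{k,m} (for every m) is T-free, and moreover adding any edge within either partite set of K_{k,m} (for m sufficiently large relative to T) creates a copy of T. -/
open Finset SimpleGraph

/-!
A connected bipartite graph has only one proper 2-colouring up to swapping the colours, so a copy
of `T` in `K_{k,m}` would put all of `A` or all of `B` into the side of size `k`, and both have
more than `k` vertices.

An added edge `xy` is used as the image of an edge `b w` of `T`, with every other edge of `T`
crossing between the two sides. On the right, `w` is a leaf at `b`, and `A \ {w}` fits into the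
`k` vertices on the left. On the left, `w` is the non-leaf neighbour of `b`; the other neighbours
of `b` (at least two, all leaves) move to the right together with `B \ {b}`, leaving
`(A \ leaves) ∪ {b}`, of size at most `k`, on the left.
-/

def ContainsCopy {α β : Type*} (H : SimpleGraph α) (T : SimpleGraph β) : Prop :=
  ∃ f : β → α, Function.Injective f ∧ ∀ u v, T.Adj u v → H.Adj (f u) (f v)

theorem Function.Embedding.exists_apply_eq_pair {W β : Type*} [Fintype W] [Fintype β]
    (h : Fintype.card W ≤ Fintype.card β) {a b : W} (hab : a ≠ b) {x y : β} (hxy : x ≠ y) :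
    ∃ g : W ↪ β, g a = x ∧ g b = y := by
  obtain ⟨e⟩ := Function.Embedding.nonempty_of_card_le h
  obtain ⟨σ, hσ⟩ := Equiv.Perm.exists_extending_pair ![e a, e b] ![x, y]
    (by simpa [Function.Injective, Fin.forall_fin_two] using ⟨hab, hab.symm⟩)
    (by simpa [Function.Injective, Fin.forall_fin_two] using ⟨hxy, hxy.symm⟩)
  exact ⟨e.trans σ.toEmbedding, hσ 0, hσ 1⟩

theorem SimpleGraph.Connected.coloring_eq_or_eq_not {V : Type*} {T : SimpleGraph V}
    (hT : T.Connected) (c₁ c₂ : T.Coloring Bool) :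
    (∀ v, c₁ v = c₂ v) ∨ ∀ v, c₁ v = !c₂ v := by
  obtain ⟨v₀⟩ := hT.nonempty
  have hcongr (v : V) : (c₁ v ↔ c₁ v₀) ↔ (c₂ v ↔ c₂ v₀) := by
    obtain ⟨p⟩ := hT v v₀
    rw [← c₁.even_length_iff_congr p, c₂.even_length_iff_congr p]
  by_cases h₀ : c₁ v₀ = c₂ v₀
  · exact .inl fun v => by grind
  · exact .inr fun v => by grind

theorem Finset.card_le_card_of_forall_isLeft {V α β : Type*} [Fintype α]
    {f : V → α ⊕ β} (hf : Function.Injective f) {S : Finset V} (hS : ∀ v ∈ S, (f v).isLeft) :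
    #S ≤ Fintype.card α := by
  classical
  calc #S = #(S.image f) := (card_image_of_injective S hf).symm
    _ ≤ #(univ.map Function.Embedding.inl) := card_le_card fun z hz => by
        obtain ⟨v, hv, rfl⟩ := mem_image.1 hz
        obtain ⟨a, ha⟩ := Sum.isLeft_iff.1 (hS v hv)
        simp [ha]
    _ = Fintype.card α := by simp

theorem not_containsCopy_completeBipartiteGraph {V α β : Type*} [Fintype α]
    {T : SimpleGraph V} (hT : T.Connected) {A B : Finset V} (hdisj : Disjoint A B)
    (hproper : ∀ u v, T.Adj u v → (u ∈ A ∧ v ∈ B) ∨ (u ∈ B ∧ v ∈ A))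
    (hA : Fintype.card α < #A) (hB : Fintype.card α < #B) :
    ¬ ContainsCopy (completeBipartiteGraph α β) T := by
  classical
  rintro ⟨f, hf, hadj⟩
  have hBA : ∀ v ∈ B, v ∉ A := fun _ hv => Finset.disjoint_right.1 hdisj hv
  let cA : T.Coloring Bool := Coloring.mk (fun v => decide (v ∈ A)) fun h => by
    rcases hproper _ _ h with ⟨hu, hv⟩ | ⟨hu, hv⟩ <;> simp [hu, hv, hBA]
  let cf : T.Coloring Bool := (CompleteBipartiteGraph.bicoloring α β).comp ⟨f, hadj _ _⟩
  have hcA (v : V) : cA v = decide (v ∈ A) := rfl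
  have hcf (v : V) : cf v = (f v).isRight := rfl
  rcases hT.coloring_eq_or_eq_not cf cA with h | h
  · refine hB.not_ge (card_le_card_of_forall_isLeft hf fun v hv => ?_)
    simpa [hcA, hcf, hBA v hv] using h v
  · refine hA.not_ge (card_le_card_of_forall_isLeft hf fun v hv => ?_)
    simpa [hcA, hcf, hv] using h v

section SumCompl

variable {V α β : Type*} (p : V → Prop) [DecidablePred p]

def sumComplEmbedding (g : {v // p v} ↪ α) (h : {v // ¬ p v} ↪ β) : V ↪ α ⊕ β :=
  (Equiv.sumCompl p).symm.toEmbedding.trans (g.sumMap h)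

variable {p} (g : {v // p v} ↪ α) (h : {v // ¬ p v} ↪ β)

theorem sumComplEmbedding_apply_of_pos {v : V} (hv : p v) :
    sumComplEmbedding p g h v = .inl (g ⟨v, hv⟩) := by
  simp [sumComplEmbedding, Equiv.sumCompl_symm_apply_of_pos hv]

theorem sumComplEmbedding_apply_of_neg {v : V} (hv : ¬ p v) :
    sumComplEmbedding p g h v = .inr (h ⟨v, hv⟩) := by
  simp [sumComplEmbedding, Equiv.sumCompl_symm_apply_of_neg hv]

theorem isLeft_sumComplEmbedding (v : V) : (sumComplEmbedding p g h v).isLeft ↔ p v := by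
  by_cases hv : p v
  · simp [sumComplEmbedding_apply_of_pos g h hv, hv]
  · simp [sumComplEmbedding_apply_of_neg g h hv, hv]

end SumCompl

theorem containsCopy_completeBipartiteGraph_sup_edge {V α β : Type*} {T : SimpleGraph V}
    {f : V → α ⊕ β} (hf : Function.Injective f) {p : V → Prop}
    (hside : ∀ v, (f v).isLeft ↔ p v) {u v : V}
    (hcut : ∀ w z, T.Adj w z → (p w ↔ ¬ p z) ∨ s(w, z) = s(u, v)) :
    ContainsCopy (completeBipartiteGraph α β ⊔ edge (f u) (f v)) T := by
  refine ⟨f, hf, fun w z hwz => ?_⟩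
  rcases hcut w z hwz with hc | he
  · left
    have hw := hside w
    have hz := hside z
    cases hfw : f w <;> cases hfz : f z <;> simp_all
  · right
    rw [edge_adj, hf.ne_iff]
    refine ⟨?_, hwz.ne⟩
    rcases Sym2.eq_iff.1 he with ⟨rfl, rfl⟩ | ⟨rfl, rfl⟩ <;> simp

theorem SimpleGraph.eq_of_adj_of_degree_eq_one {V : Type*} {T : SimpleGraph V} {w b z : V}
    [Fintype (T.neighborSet w)] (hw : T.degree w = 1) (hb : T.Adj w b) (hz : T.Adj w z) :
    z = b :=
  (degree_eq_one_iff_existsUnique_adj.1 hw).unique hz hb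

theorem Finset.exists_forall_erase_of_card_filter_not_eq_one {V : Type*} [DecidableEq V]
    {s : Finset V} {p : V → Prop} [DecidablePred p] (h : #(s.filter fun v => ¬ p v) = 1) :
    ∃ u ∈ s, ∀ w ∈ s.erase u, p w := by
  obtain ⟨u, hu⟩ := card_eq_one.1 h
  have hus : u ∈ s := (mem_filter.1 (hu ▸ mem_singleton_self u)).1
  refine ⟨u, hus, fun w hw => ?_⟩
  by_contra hpw
  have : w ∈ s.filter fun v => ¬ p v := mem_filter.2 ⟨mem_of_mem_erase hw, hpw⟩
  rw [hu, mem_singleton] at this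
  exact ne_of_mem_erase hw this

section BipartiteTree

variable {V : Type*} {T : SimpleGraph V} {A B : Finset V}
  (hproper : ∀ u v, T.Adj u v → (u ∈ A ∧ v ∈ B) ∨ (u ∈ B ∧ v ∈ A))
include hproper

theorem mem_of_adj_of_mem_right (hdisj : Disjoint A B) {b w : V} (hb : b ∈ B) (hbw : T.Adj b w) :
    w ∈ A := by
  rcases hproper b w hbw with ⟨hbA, -⟩ | ⟨-, hw⟩
  · exact absurd hbA (Finset.disjoint_right.1 hdisj hb)
  · exact hw

theorem forall_adj_crosses_or_eq_of_mem {P : Finset V} {u v : V}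
    (h : ∀ w z, T.Adj w z → w ∈ A → z ∈ B → (w ∈ P ↔ z ∉ P) ∨ s(w, z) = s(u, v)) :
    ∀ w z, T.Adj w z → (w ∈ P ↔ z ∉ P) ∨ s(w, z) = s(u, v) := by
  intro w z hwz
  rcases hproper w z hwz with ⟨hw, hz⟩ | ⟨hw, hz⟩
  · exact h w z hwz hw hz
  · rcases h z w hwz.symm hz hw with hc | he
    · exact .inl (by tauto)
    · exact .inr (by rw [Sym2.eq_swap, he])

variable {α β : Type*} [Fintype V] [DecidableEq V] [Fintype α] [Fintype β] (hdisj : Disjoint A B)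
include hdisj

theorem containsCopy_completeBipartiteGraph_sup_edge_inr_of_leaf [DecidableRel T.Adj] {l b : V}
    (hl : l ∈ A) (hb : b ∈ B) (hleaf : T.degree l = 1) (hlb : T.Adj l b)
    (hA : #A ≤ Fintype.card α + 1) (hV : Fintype.card V ≤ Fintype.card β)
    {x y : β} (hxy : x ≠ y) :
    ContainsCopy (completeBipartiteGraph α β ⊔ edge (.inr x) (.inr y)) T := by
  have hBA : ∀ v ∈ B, v ∉ A := fun _ hv => Finset.disjoint_right.1 hdisj hv
  set P := A.erase l
  have hbP : b ∉ P := fun h => hBA b hb (mem_of_mem_erase h)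
  have hlP : l ∉ P := notMem_erase l A
  obtain ⟨g⟩ : Nonempty (P ↪ α) :=
    Function.Embedding.nonempty_of_card_le (by rw [Fintype.card_coe, card_erase_of_mem hl]; omega)
  obtain ⟨h, hhb, hhl⟩ := Function.Embedding.exists_apply_eq_pair
    ((Fintype.card_subtype_le (· ∉ P)).trans hV) (a := ⟨b, hbP⟩) (b := ⟨l, hlP⟩)
    (Subtype.coe_ne_coe.1 hlb.symm.ne) hxy
  have hcut := forall_adj_crosses_or_eq_of_mem hproper (P := P) (u := b) (v := l)
    fun w z hwz hw hz => by
      by_cases hwl : w = l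
      · subst hwl
        rw [eq_of_adj_of_degree_eq_one hleaf hlb hwz, Sym2.eq_swap]
        exact .inr rfl
      · exact .inl (by simp [P, hwl, hw, hBA z hz])
  have := containsCopy_completeBipartiteGraph_sup_edge (sumComplEmbedding _ g h).injective
    (isLeft_sumComplEmbedding g h) hcut
  rwa [sumComplEmbedding_apply_of_neg g h hbP, sumComplEmbedding_apply_of_neg g h hlP, hhb,
    hhl] at this

theorem containsCopy_completeBipartiteGraph_sup_edge_inl_of_leaves [DecidableRel T.Adj] {b u : V}
    (hb : b ∈ B) (hu : u ∈ A) (hleaves : ∀ w ∈ (T.neighborFinset b).erase u, T.degree w = 1)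
    (hS : 2 ≤ #((T.neighborFinset b).erase u))
    (hA : #A ≤ Fintype.card α + 1) (hV : Fintype.card V ≤ Fintype.card β)
    {x y : α} (hxy : x ≠ y) :
    ContainsCopy (completeBipartiteGraph α β ⊔ edge (.inl x) (.inl y)) T := by
  have hBA : ∀ v ∈ B, v ∉ A := fun _ hv => Finset.disjoint_right.1 hdisj hv
  set S := (T.neighborFinset b).erase u
  have hSadj : ∀ w ∈ S, T.Adj w b := fun w hw =>
    ((mem_neighborFinset _ _ _).1 (mem_of_mem_erase hw)).symm
  have hSA : S ⊆ A := fun w hw => mem_of_adj_of_mem_right hproper hdisj hb (hSadj w hw).symm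
  set P := insert b (A \ S)
  have hbP : b ∈ P := mem_insert_self b _
  have huP : u ∈ P := mem_insert_of_mem (mem_sdiff.2 ⟨hu, notMem_erase u _⟩)
  have hbu : b ≠ u := fun hbu => hBA b hb (hbu ▸ hu)
  have hP : #P ≤ Fintype.card α :=
    calc #P ≤ #(A \ S) + 1 := card_insert_le _ _
      _ = #A - #S + 1 := by rw [card_sdiff_of_subset hSA]
      _ ≤ Fintype.card α := by have := card_le_card hSA; omega
  obtain ⟨g, hgb, hgu⟩ := Function.Embedding.exists_apply_eq_pair
    (by rwa [Fintype.card_coe]) (a := ⟨b, hbP⟩) (b := ⟨u, huP⟩)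
    (Subtype.coe_ne_coe.1 hbu) hxy
  obtain ⟨h⟩ : Nonempty ({v // v ∉ P} ↪ β) :=
    Function.Embedding.nonempty_of_card_le ((Fintype.card_subtype_le _).trans hV)
  have hcut := forall_adj_crosses_or_eq_of_mem hproper (P := P) (u := b) (v := u)
    fun w z hwz hw hz => by
      by_cases hzb : z = b
      · subst hzb
        by_cases hwu : w = u
        · subst hwu
          exact .inr Sym2.eq_swap
        · have hwS : w ∈ S := mem_erase.2 ⟨hwu, (mem_neighborFinset _ _ _).2 hwz.symm⟩
          exact .inl (by simp [P, hwS, hbP, hwz.ne])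
      · have hwS : w ∉ S := fun hwS =>
          hzb (eq_of_adj_of_degree_eq_one (hleaves w hwS) (hSadj w hwS) hwz)
        exact .inl (by simp [P, hzb, hw, hwS, hBA z hz])
  have := containsCopy_completeBipartiteGraph_sup_edge (sumComplEmbedding _ g h).injective
    (isLeft_sumComplEmbedding g h) hcut
  rwa [sumComplEmbedding_apply_of_pos g h hbP, sumComplEmbedding_apply_of_pos g h huP, hgb,
    hgu] at this

end BipartiteTree

theorem stmt_17_general {VT : Type*} [Fintype VT] (T : SimpleGraph VT)
    [DecidableRel T.Adj] (hT : T.IsTree)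
    (A B : Finset VT) (hdisj : Disjoint A B)
    (hproper : ∀ u v, T.Adj u v → (u ∈ A ∧ v ∈ B) ∨ (u ∈ B ∧ v ∈ A))
    (k : ℕ) (hA : A.card = k + 1) (hAB : A.card ≤ B.card)
    (b : VT) (hb : b ∈ B) (hdeg : 3 ≤ T.degree b)
    (hone : ((T.neighborFinset b).filter (fun u => T.degree u ≠ 1)).card = 1) :
    (∀ m : ℕ, ¬ ContainsCopy (completeBipartiteGraph (Fin k) (Fin m)) T) ∧
    (∃ M : ℕ, ∀ m : ℕ, M ≤ m → ∀ x y : Fin k ⊕ Fin m, x ≠ y →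
      ((x.isLeft = true ∧ y.isLeft = true) ∨ (x.isRight = true ∧ y.isRight = true)) →
      ContainsCopy
        (completeBipartiteGraph (Fin k) (Fin m) ⊔ SimpleGraph.fromEdgeSet {Sym2.mk x y})
        T) := by
  classical
  obtain ⟨u, hu, hleaves⟩ :=
    exists_forall_erase_of_card_filter_not_eq_one (p := fun v => T.degree v = 1) hone
  have hnbr {w : VT} (hw : w ∈ T.neighborFinset b) : w ∈ A :=
    mem_of_adj_of_mem_right hproper hdisj hb ((mem_neighborFinset _ _ _).1 hw)
  have hS : 2 ≤ #((T.neighborFinset b).erase u) := by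
    rw [card_erase_of_mem hu, card_neighborFinset_eq_degree]; omega
  refine ⟨fun m => not_containsCopy_completeBipartiteGraph hT.connected hdisj hproper
    (by simp [hA]) (by simp; omega), Fintype.card VT, fun m hm x y hxy hside => ?_⟩
  have hAk : #A ≤ Fintype.card (Fin k) + 1 := by simp [hA]
  have hVm : Fintype.card VT ≤ Fintype.card (Fin m) := by simpa using hm
  rcases hside with ⟨hx, hy⟩ | ⟨hx, hy⟩
  · obtain ⟨x, rfl⟩ := Sum.isLeft_iff.1 hx
    obtain ⟨y, rfl⟩ := Sum.isLeft_iff.1 hy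
    exact containsCopy_completeBipartiteGraph_sup_edge_inl_of_leaves hproper hdisj hb (hnbr hu)
      hleaves hS hAk hVm (by simpa using hxy)
  · obtain ⟨x, rfl⟩ := Sum.isRight_iff.1 hx
    obtain ⟨y, rfl⟩ := Sum.isRight_iff.1 hy
    obtain ⟨l, hl⟩ : ((T.neighborFinset b).erase u).Nonempty := card_pos.1 (by omega)
    have hlb : T.Adj l b := ((mem_neighborFinset _ _ _).1 (mem_of_mem_erase hl)).symm
    exact containsCopy_completeBipartiteGraph_sup_edge_inr_of_leaf hproper hdisj
      (hnbr (mem_of_mem_erase hl)) hb (hleaves l hl) hlb hAk hVm (by simpa using hxy)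

/-- Let T be a tree with proper 2-coloring A ⊔ B, |A| = k+1 ≤ |B|, such that B
contains a vertex of degree ≥ 3 exactly one of whose neighbors is not a leaf.
Then K_{k,m} is T-free for every m, and for m large enough, adding any edge
within either partite set of K_{k,m} creates a copy of T. -/
theorem stmt_17 {VT : Type*} [Fintype VT] [DecidableEq VT] (T : SimpleGraph VT)
    [DecidableRel T.Adj] (hT : T.IsTree)
    (A B : Finset VT) (hdisj : Disjoint A B) (hcover : A ∪ B = Finset.univ)
    (hproper : ∀ u v, T.Adj u v → (u ∈ A ∧ v ∈ B) ∨ (u ∈ B ∧ v ∈ A))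
    (k : ℕ) (hA : A.card = k + 1) (hAB : A.card ≤ B.card)
    (b : VT) (hb : b ∈ B) (hdeg : 3 ≤ T.degree b)
    (hone : ((T.neighborFinset b).filter (fun u => T.degree u ≠ 1)).card = 1) :
    (∀ m : ℕ, ¬ ContainsCopy (completeBipartiteGraph (Fin k) (Fin m)) T) ∧
    (∃ M : ℕ, ∀ m : ℕ, M ≤ m → ∀ x y : Fin k ⊕ Fin m, x ≠ y →
      ((x.isLeft = true ∧ y.isLeft = true) ∨ (x.isRight = true ∧ y.isRight = true)) →
      ContainsCopy
        (completeBipartiteGraph (Fin k) (Fin m) ⊔ SimpleGraph.fromEdgeSet {Sym2.mk x y})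
        T) :=
  stmt_17_general T hT A B hdisj hproper k hA hAB b hb hdeg hone
end
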